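/- Let n ≥ 3 and define u : ℝ^n → ℝ by u(x) = (n(n-2))^{(n-2)/4} · (1 + |x|²)^{-(n-2)/2}. Then u is smooth, positive, and satisfies -Δu = u^{(n+2)/(n-2)} on all of ℝ^n, where Δ = Σᵢ ∂²/∂xᵢ² is the Euclidean Laplacian. -/

import Mathlib

/-- The Euclidean Laplacian `Δu = Σᵢ ∂²u/∂xᵢ²` on `ℝ^n`. -/
noncomputable def euclideanLaplacian {n : ℕ}
    (u : EuclideanSpace ℝ (Fin n) → ℝ) (x : EuclideanSpace ℝ (Fin n)) : ℝ :=
  ∑ i : Fin n,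
    fderiv ℝ (fun y => fderiv ℝ u y (EuclideanSpace.single i 1)) x
      (EuclideanSpace.single i 1)

open EuclideanSpace Real RealInnerProductSpace

variable {n : ℕ}

lemma bubble_hasFDerivAt (c p : ℝ) (x : EuclideanSpace ℝ (Fin n)) :
    HasFDerivAt (fun y : EuclideanSpace ℝ (Fin n) => c * (1 + ‖y‖ ^ 2) ^ p)
      ((c * p * (1 + ‖x‖ ^ 2) ^ (p - 1) * 2) • innerSL ℝ x) x := by
  have hw : HasFDerivAt (fun y : EuclideanSpace ℝ (Fin n) => 1 + ‖y‖ ^ 2)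
      ((2:ℕ) • innerSL ℝ x) x := by
    simpa using (hasStrictFDerivAt_norm_sq x).hasFDerivAt.const_add (1:ℝ)
  have h1 : (0:ℝ) < 1 + ‖x‖ ^ 2 := by positivity
  have h2 := ((Real.hasDerivAt_rpow_const (p := p) (x := 1 + ‖x‖ ^ 2)
    (Or.inl h1.ne')).comp_hasFDerivAt x hw).const_mul c
  refine h2.congr_fderiv ?_
  module

lemma bubble_fderiv_apply (c p : ℝ) (x : EuclideanSpace ℝ (Fin n)) (i : Fin n) :
    fderiv ℝ (fun y : EuclideanSpace ℝ (Fin n) => c * (1 + ‖y‖ ^ 2) ^ p) x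
      (EuclideanSpace.single i 1)
      = (c * p * 2) * ((1 + ‖x‖ ^ 2) ^ (p - 1) * x i) := by
  rw [(bubble_hasFDerivAt c p x).fderiv]
  simp [EuclideanSpace.inner_single_right]
  ring

lemma bubble_snd (c p : ℝ) (x : EuclideanSpace ℝ (Fin n)) (i : Fin n) :
    fderiv ℝ (fun y : EuclideanSpace ℝ (Fin n) =>
        (c * p * 2) * ((1 + ‖y‖ ^ 2) ^ (p - 1) * y i)) x (EuclideanSpace.single i 1)
      = (c * p * 2) * ((1 + ‖x‖ ^ 2) ^ (p - 1)
          + (p - 1) * (1 + ‖x‖ ^ 2) ^ (p - 2) * 2 * x i ^ 2) := by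
  have hg : HasFDerivAt (fun y : EuclideanSpace ℝ (Fin n) => (1 + ‖y‖ ^ 2) ^ (p - 1))
      (((p - 1) * (1 + ‖x‖ ^ 2) ^ (p - 2) * 2) • innerSL ℝ x) x := by
    have := bubble_hasFDerivAt (n := n) 1 (p - 1) x
    simpa [sub_sub, show (1:ℝ) + 1 = 2 by norm_num] using this
  have hB : HasFDerivAt (fun y : EuclideanSpace ℝ (Fin n) => y i)
      (EuclideanSpace.proj (𝕜 := ℝ) i) x := by
    simpa using (EuclideanSpace.proj i : EuclideanSpace ℝ (Fin n) →L[ℝ] ℝ).hasFDerivAt (x := x)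
  have h := ((hg.mul hB).const_mul (c * p * 2)).fderiv
  simp only [Pi.mul_def] at h
  rw [h]
  simp [EuclideanSpace.inner_single_right]
  ring

lemma bubble_laplacian (c p : ℝ) (x : EuclideanSpace ℝ (Fin n)) :
    euclideanLaplacian (fun y : EuclideanSpace ℝ (Fin n) => c * (1 + ‖y‖ ^ 2) ^ p) x
      = (c * p * 2) * ((n : ℝ) * (1 + ‖x‖ ^ 2) ^ (p - 1)
          + (p - 1) * (1 + ‖x‖ ^ 2) ^ (p - 2) * 2 * ‖x‖ ^ 2) := by
  have hnorm : ‖x‖ ^ 2 = ∑ i, x i ^ 2 := by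
    rw [EuclideanSpace.norm_eq, Real.sq_sqrt (by positivity)]; simp [Real.norm_eq_abs, sq_abs]
  unfold euclideanLaplacian
  have : ∀ i : Fin n,
      fderiv ℝ (fun y => fderiv ℝ (fun y : EuclideanSpace ℝ (Fin n) =>
          c * (1 + ‖y‖ ^ 2) ^ p) y (EuclideanSpace.single i 1)) x (EuclideanSpace.single i 1)
        = (c * p * 2) * ((1 + ‖x‖ ^ 2) ^ (p - 1)
            + (p - 1) * (1 + ‖x‖ ^ 2) ^ (p - 2) * 2 * x i ^ 2) := by
    intro i
    have hfun : (fun y => fderiv ℝ (fun y : EuclideanSpace ℝ (Fin n) =>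
        c * (1 + ‖y‖ ^ 2) ^ p) y (EuclideanSpace.single i 1))
        = fun y : EuclideanSpace ℝ (Fin n) =>
            (c * p * 2) * ((1 + ‖y‖ ^ 2) ^ (p - 1) * y i) :=
      funext fun y => bubble_fderiv_apply c p y i
    rw [hfun, bubble_snd]
  rw [Finset.sum_congr rfl fun i _ => this i]
  have hs := ‖x‖ ^ 2
  calc ∑ i : Fin n, c * p * 2 * ((1 + ‖x‖ ^ 2) ^ (p - 1)
          + (p - 1) * (1 + ‖x‖ ^ 2) ^ (p - 2) * 2 * x i ^ 2)
      = ∑ i : Fin n, (c * p * 2 * (1 + ‖x‖ ^ 2) ^ (p - 1)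
          + (c * p * 2 * ((p - 1) * (1 + ‖x‖ ^ 2) ^ (p - 2) * 2)) * x i ^ 2) :=
        Finset.sum_congr rfl fun i _ => by ring
    _ = (Finset.univ.card (α := Fin n)) • (c * p * 2 * (1 + ‖x‖ ^ 2) ^ (p - 1))
          + (c * p * 2 * ((p - 1) * (1 + ‖x‖ ^ 2) ^ (p - 2) * 2)) * ∑ i, x i ^ 2 := by
        rw [Finset.sum_add_distrib, Finset.sum_const, ← Finset.mul_sum]
    _ = (c * p * 2) * ((n : ℝ) * (1 + ‖x‖ ^ 2) ^ (p - 1)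
          + (p - 1) * (1 + ‖x‖ ^ 2) ^ (p - 2) * 2 * ‖x‖ ^ 2) := by
        rw [Finset.card_univ, Fintype.card_fin, nsmul_eq_mul, ← hnorm]; ring

theorem bubble_main (n : ℕ) (hn : 3 ≤ n) :
    ContDiff ℝ (⊤ : ℕ∞) (fun x : EuclideanSpace ℝ (Fin n) =>
        ((n : ℝ) * ((n : ℝ) - 2)) ^ (((n : ℝ) - 2) / 4) *
          (1 + ‖x‖ ^ 2) ^ (-(((n : ℝ) - 2) / 2))) ∧
    (∀ x : EuclideanSpace ℝ (Fin n), 0 <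
        ((n : ℝ) * ((n : ℝ) - 2)) ^ (((n : ℝ) - 2) / 4) *
          (1 + ‖x‖ ^ 2) ^ (-(((n : ℝ) - 2) / 2))) ∧
    ∀ x : EuclideanSpace ℝ (Fin n),
      -euclideanLaplacian (fun x : EuclideanSpace ℝ (Fin n) =>
          ((n : ℝ) * ((n : ℝ) - 2)) ^ (((n : ℝ) - 2) / 4) *
            (1 + ‖x‖ ^ 2) ^ (-(((n : ℝ) - 2) / 2))) x
        = (((n : ℝ) * ((n : ℝ) - 2)) ^ (((n : ℝ) - 2) / 4) *
            (1 + ‖x‖ ^ 2) ^ (-(((n : ℝ) - 2) / 2))) ^ (((n : ℝ) + 2) / ((n : ℝ) - 2)) := by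
  have hn3 : (3:ℝ) ≤ (n:ℝ) := by exact_mod_cast hn
  have hn2 : (0:ℝ) < (n:ℝ) - 2 := by linarith
  have ha : (0:ℝ) < (n:ℝ) * ((n:ℝ) - 2) := by nlinarith
  set C : ℝ := ((n : ℝ) * ((n : ℝ) - 2)) ^ (((n : ℝ) - 2) / 4) with hCdef
  have hC : 0 < C := Real.rpow_pos_of_pos ha _
  set P : ℝ := -(((n : ℝ) - 2) / 2) with hPdef
  refine ⟨?_, ?_, ?_⟩
  · rw [contDiff_iff_contDiffAt]
    intro x
    have hw : (0:ℝ) < 1 + ‖x‖ ^ 2 := by positivity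
    have hb : ContDiffAt ℝ (⊤ : ℕ∞) (fun y : EuclideanSpace ℝ (Fin n) => 1 + ‖y‖ ^ 2) x :=
      (contDiff_const.add (contDiff_norm_sq ℝ)).contDiffAt
    exact contDiffAt_const.mul
      (hb.rpow_const_of_ne hw.ne')
  · intro x
    have hw : (0:ℝ) < 1 + ‖x‖ ^ 2 := by positivity
    exact mul_pos hC (Real.rpow_pos_of_pos hw _)
  · intro x
    rw [bubble_laplacian]
    have hw : (0:ℝ) < 1 + ‖x‖ ^ 2 := by positivity
    set w : ℝ := 1 + ‖x‖ ^ 2 with hwdef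
    have hx2 : ‖x‖ ^ 2 = w - 1 := by rw [hwdef]; ring
    have hrhs : (C * w ^ P) ^ (((n : ℝ) + 2) / ((n : ℝ) - 2))
        = (n:ℝ) * ((n:ℝ) - 2) * C * w ^ (P - 2) := by
      rw [Real.mul_rpow hC.le (Real.rpow_pos_of_pos hw _).le, hCdef,
        ← Real.rpow_mul ha.le, ← Real.rpow_mul hw.le]
      have e1 : ((n:ℝ) - 2) / 4 * (((n:ℝ) + 2) / ((n:ℝ) - 2)) = 1 + ((n:ℝ) - 2) / 4 := by
        field_simp
        ring
      have e2 : P * (((n:ℝ) + 2) / ((n:ℝ) - 2)) = P - 2 := by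
        rw [hPdef]
        field_simp
        ring
      rw [e1, e2, Real.rpow_add ha, Real.rpow_one]
    rw [hrhs]
    have e3 : w ^ (P - 1) = w ^ (P - 2) * w := by
      have : P - 1 = P - 2 + 1 := by ring
      rw [this, Real.rpow_add hw, Real.rpow_one]
    rw [e3, hx2, hPdef]
    ring


/-- The standard bubble `u(x) = (n(n-2))^((n-2)/4) (1 + |x|²)^(-(n-2)/2)` is smooth,
positive, and solves `-Δu = u^((n+2)/(n-2))` on `ℝ^n` for `n ≥ 3`. -/
theorem standard_bubble_solves_yamabe (n : ℕ) (hn : 3 ≤ n) :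
    let u : EuclideanSpace ℝ (Fin n) → ℝ := fun x =>
      ((n : ℝ) * ((n : ℝ) - 2)) ^ (((n : ℝ) - 2) / 4) *
        (1 + ‖x‖ ^ 2) ^ (-(((n : ℝ) - 2) / 2))
    ContDiff ℝ (⊤ : ℕ∞) u ∧ (∀ x, 0 < u x) ∧
      ∀ x, -euclideanLaplacian u x = u x ^ (((n : ℝ) + 2) / ((n : ℝ) - 2)) := by
  intro u
  exact bubble_main n hn
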